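/- Fix 0<α<n, a dyadic grid D in ℝⁿ, a weight σ, and a Young function Φ. Then there is a constant C = C(α) such that for any cube P ∈ D and any measurable function f, Σ_{Q∈D, Q⊆P} |Q|^{α/n} σ(Q) ‖f‖_{Φ,Q,σ} ≤ C |P|^{α/n} σ(P) ‖f‖_{Φ,P,σ}, where σ(Q) = ∫_Q σ dx. -/

import Mathlib

open MeasureTheory ENNReal Set Filter

noncomputable section

abbrev Rn (n : ℕ) := EuclideanSpace ℝ (Fin n)

/-- The half-open cube with corner `a` and side length `h`. -/
def cube {n : ℕ} (a : Rn n) (h : ℝ) : Set (Rn n) :=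
  {x | ∀ i, a i ≤ x i ∧ x i < a i + h}

/-- Average of an `ℝ≥0∞`-valued function over a set (w.r.t. Lebesgue measure). -/
def eavg {n : ℕ} (Q : Set (Rn n)) (g : Rn n → ℝ≥0∞) : ℝ≥0∞ :=
  (volume Q)⁻¹ * ∫⁻ x in Q, g x

/-- A weight: a measurable `ℝ≥0∞`-valued function which is integrable on every cube. -/
def IsWeight {n : ℕ} (w : Rn n → ℝ≥0∞) : Prop :=
  Measurable w ∧ ∀ (a : Rn n) (h : ℝ), 0 < h → (∫⁻ x in cube a h, w x) < ∞

/-- The fractional integral (Riesz potential) `I_α f`. -/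
def fracInt {n : ℕ} (α : ℝ) (f : Rn n → ℝ) (x : Rn n) : ℝ :=
  ∫ y, f y / ‖x - y‖ ^ ((n : ℝ) - α)

/-- The fractional integral of a nonnegative function, as a lower integral. -/
def fracIntNN {n : ℕ} (α : ℝ) (f : Rn n → ℝ) (x : Rn n) : ℝ≥0∞ :=
  ∫⁻ y, ENNReal.ofReal (f y) / ENNReal.ofReal (‖x - y‖ ^ ((n : ℝ) - α))

/-- The commutator `[b, I_α] f`. -/
def commFracInt {n : ℕ} (α : ℝ) (b f : Rn n → ℝ) (x : Rn n) : ℝ :=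
  ∫ y, (b x - b y) * f y / ‖x - y‖ ^ ((n : ℝ) - α)

/-- The `A_{1,q}` characteristic of a weight. -/
def A1qConst {n : ℕ} (q : ℝ) (w : Rn n → ℝ≥0∞) : ℝ≥0∞ :=
  ⨆ (a : Rn n) (h : ℝ) (_ : 0 < h),
    essSup (fun x => (eavg (cube a h) fun y => w y ^ q) ^ (1 / q) * (w x)⁻¹)
      (volume.restrict (cube a h))

/-- The `A_{p,q}` characteristic of a weight (`p'` is the conjugate exponent of `p`). -/
def ApqConst {n : ℕ} (p' q : ℝ) (w : Rn n → ℝ≥0∞) : ℝ≥0∞ :=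
  ⨆ (a : Rn n) (h : ℝ) (_ : 0 < h),
    (eavg (cube a h) fun y => w y ^ q) ^ (1 / q) *
      (eavg (cube a h) fun y => w y ^ (-p')) ^ (1 / p')

/-- The Muckenhoupt `A_p` characteristic of a weight. -/
def ApConst {n : ℕ} (p : ℝ) (σ : Rn n → ℝ≥0∞) : ℝ≥0∞ :=
  ⨆ (a : Rn n) (h : ℝ) (_ : 0 < h),
    eavg (cube a h) σ * (eavg (cube a h) fun y => σ y ^ (1 - p / (p - 1))) ^ (p - 1)

/-- The BMO norm. -/
def bmoNorm {n : ℕ} (b : Rn n → ℝ) : ℝ≥0∞ :=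
  ⨆ (a : Rn n) (h : ℝ) (_ : 0 < h),
    eavg (cube a h) fun x => ENNReal.ofReal |b x - ⨍ y in cube a h, b y|

/-- A dyadic grid: a family of (corner, side length) data of cubes. -/
structure DyadicGrid (n : ℕ) where
  cubes : Set (Rn n × ℝ)
  side_pow : ∀ c ∈ cubes, ∃ k : ℤ, c.2 = (2 : ℝ) ^ k
  nested : ∀ c ∈ cubes, ∀ c' ∈ cubes,
    cube c.1 c.2 ∩ cube c'.1 c'.2 = cube c.1 c.2 ∨
      cube c.1 c.2 ∩ cube c'.1 c'.2 = cube c'.1 c'.2 ∨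
      cube c.1 c.2 ∩ cube c'.1 c'.2 = ∅
  partition : ∀ k : ℤ, ∀ x : Rn n, ∃! c, c ∈ cubes ∧ c.2 = (2 : ℝ) ^ k ∧ x ∈ cube c.1 c.2

/-- A sparse family of cubes. -/
def IsSparse {n : ℕ} (S : Set (Rn n × ℝ)) : Prop :=
  ∀ c ∈ S,
    volume (⋃ c' ∈ {c' ∈ S | cube c'.1 c'.2 ⊂ cube c.1 c.2}, cube c'.1 c'.2) ≤
      volume (cube c.1 c.2) / 2

/-- The dyadic fractional integral operator associated to a family `S` of cubes. -/
def sumIalpha {n : ℕ} (α : ℝ) (S : Set (Rn n × ℝ)) (f : Rn n → ℝ) (x : Rn n) : ℝ≥0∞ :=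
  ∑' c : S, (cube c.1.1 c.1.2).indicator
    (fun _ => volume (cube c.1.1 c.1.2) ^ (α / (n : ℝ)) *
      eavg (cube c.1.1 c.1.2) fun y => ENNReal.ofReal (f y)) x

/-- The dyadic commutator associated to a family `S` of cubes. -/
def sumComm {n : ℕ} (α : ℝ) (S : Set (Rn n × ℝ)) (b f : Rn n → ℝ) (x : Rn n) : ℝ≥0∞ :=
  ∑' c : S, (cube c.1.1 c.1.2).indicator
    (fun z => volume (cube c.1.1 c.1.2) ^ (α / (n : ℝ)) *
      eavg (cube c.1.1 c.1.2) fun y => ENNReal.ofReal (|b z - b y| * f y)) x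

/-- The dyadic fractional maximal operator associated to a family `S` of cubes. -/
def dyadicMax {n : ℕ} (α : ℝ) (S : Set (Rn n × ℝ)) (f : Rn n → ℝ) (x : Rn n) : ℝ≥0∞ :=
  ⨆ (c : S) (_ : x ∈ cube c.1.1 c.1.2),
    volume (cube c.1.1 c.1.2) ^ (α / (n : ℝ)) *
      eavg (cube c.1.1 c.1.2) fun y => ENNReal.ofReal |f y|

/-- The normalized Luxemburg norm of `f` on `Q` w.r.t. the Young function `Φ`
and the measure `σ dx`. -/
def luxNorm {n : ℕ} (Φ : ℝ → ℝ) (Q : Set (Rn n)) (σ : Rn n → ℝ≥0∞) (f : Rn n → ℝ) : ℝ≥0∞ :=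
  sInf {l : ℝ≥0∞ | ∃ lr : ℝ, 0 < lr ∧ l = ENNReal.ofReal lr ∧
    (∫⁻ x in Q, σ x)⁻¹ * ∫⁻ x in Q, ENNReal.ofReal (Φ (|f x| / lr)) * σ x ≤ 1}

/-- The weighted dyadic Orlicz fractional maximal operator. -/
def maxOrlicz {n : ℕ} (Φ : ℝ → ℝ) (α : ℝ) (S : Set (Rn n × ℝ)) (σ : Rn n → ℝ≥0∞)
    (f : Rn n → ℝ) (x : Rn n) : ℝ≥0∞ :=
  ⨆ (c : S) (_ : x ∈ cube c.1.1 c.1.2),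
    (∫⁻ y in cube c.1.1 c.1.2, σ y) ^ (α / (n : ℝ)) * luxNorm Φ (cube c.1.1 c.1.2) σ f

/-- The weighted dyadic fractional maximal operator (`Φ(t) = t` case). -/
def maxWeighted {n : ℕ} (α : ℝ) (S : Set (Rn n × ℝ)) (σ : Rn n → ℝ≥0∞)
    (f : Rn n → ℝ) (x : Rn n) : ℝ≥0∞ :=
  ⨆ (c : S) (_ : x ∈ cube c.1.1 c.1.2),
    (∫⁻ y in cube c.1.1 c.1.2, σ y) ^ (α / (n : ℝ)) *
      ((∫⁻ y in cube c.1.1 c.1.2, σ y)⁻¹ * ∫⁻ y in cube c.1.1 c.1.2, ENNReal.ofReal |f y| * σ y)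


section AuxSumOverSubcubes

open Function

lemma cube_eq_preimage' {n : ℕ} (a : Rn n) (h : ℝ) :
    cube a h = (MeasurableEquiv.toLp 2 (Fin n → ℝ)).symm ⁻¹'
      (Set.univ.pi fun i => Set.Ico (a i) (a i + h)) := by
  ext x
  simp [cube, Set.mem_pi, MeasurableEquiv.coe_toLp_symm, Set.mem_Ico]

lemma measurableSet_cube' {n : ℕ} (a : Rn n) (h : ℝ) : MeasurableSet (cube a h) := by
  rw [cube_eq_preimage']
  exact (MeasurableEquiv.toLp 2 (Fin n → ℝ)).symm.measurable
    (MeasurableSet.univ_pi fun i => measurableSet_Ico)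

lemma volume_cube' {n : ℕ} (a : Rn n) (h : ℝ) :
    volume (cube a h) = ENNReal.ofReal h ^ n := by
  rw [cube_eq_preimage',
    (EuclideanSpace.volume_preserving_symm_measurableEquiv_toLp (Fin n)).measure_preimage
      (MeasurableSet.univ_pi fun i => measurableSet_Ico).nullMeasurableSet,
    volume_pi_pi]
  simp [Real.volume_Ico]

/-- `|Q|^{α/n}` for a dyadic cube of side `2^k`. -/
def rk (α : ℝ) (k : ℤ) : ℝ≥0∞ := ENNReal.ofReal ((2:ℝ) ^ ((k:ℝ) * α))

lemma rk_ne_top (α : ℝ) (k : ℤ) : rk α k ≠ ∞ := ENNReal.ofReal_ne_top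

lemma rk_ne_zero (α : ℝ) (k : ℤ) : rk α k ≠ 0 :=
  (ENNReal.ofReal_pos.mpr (Real.rpow_pos_of_pos two_pos _)).ne'

lemma volume_cube_rpow {n : ℕ} (hn : 0 < n) (a : Rn n) (k : ℤ) {α : ℝ} :
    volume (cube a ((2:ℝ) ^ k)) ^ (α / (n : ℝ)) = rk α k := by
  have hn' : (n : ℝ) ≠ 0 := Nat.cast_ne_zero.mpr hn.ne'
  rw [volume_cube', ← ENNReal.rpow_natCast, ← ENNReal.rpow_mul,
    show (n : ℝ) * (α / n) = α by field_simp,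
    ENNReal.ofReal_rpow_of_pos (zpow_pos two_pos k),
    ← Real.rpow_intCast 2 k, ← Real.rpow_mul (by norm_num), rk]

lemma rk_geom (α : ℝ) (kP : ℤ) :
    (∑' k : ℤ, if k ≤ kP then rk α k else 0) =
      rk α kP * (1 - ENNReal.ofReal ((2:ℝ) ^ (-α)))⁻¹ := by
  have hinj : Function.Injective (fun j : ℕ => kP - (j : ℤ)) := by
    intro a b hab
    simpa using hab
  have hsupp : Function.support (fun k : ℤ => if k ≤ kP then rk α k else 0) ⊆
      Set.range (fun j : ℕ => kP - (j : ℤ)) := by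
    intro k hk
    rcases le_or_gt k kP with h | h
    · exact ⟨(kP - k).toNat, by simp; omega⟩
    · exact absurd (if_neg (not_le.mpr h)) hk
  calc (∑' k : ℤ, if k ≤ kP then rk α k else 0)
      = ∑' j : ℕ, (if kP - (j : ℤ) ≤ kP then rk α (kP - (j : ℤ)) else 0) :=
        (Function.Injective.tsum_eq hinj hsupp).symm
    _ = ∑' j : ℕ, rk α kP * (ENNReal.ofReal ((2:ℝ) ^ (-α))) ^ j := by
        refine tsum_congr fun j => ?_
        rw [if_pos (by omega)]
        rw [rk, rk, ← ENNReal.ofReal_pow (by positivity), ← ENNReal.ofReal_mul (by positivity)]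
        congr 1
        rw [← Real.rpow_natCast ((2:ℝ) ^ (-α)) j, ← Real.rpow_mul (by norm_num),
          ← Real.rpow_add two_pos]
        congr 1
        push_cast
        ring
    _ = rk α kP * (1 - ENNReal.ofReal ((2:ℝ) ^ (-α)))⁻¹ := by
        rw [ENNReal.tsum_mul_left, tsum_geometric]

/-- The per-cube bound coming from convexity of `Φ`. -/
lemma percube_bound {n : ℕ} {σ : Rn n → ℝ≥0∞} {Φ : ℝ → ℝ}
    (hΦc : ConvexOn ℝ (Ici 0) Φ) (hΦ0 : Φ 0 = 0)
    {f : Rn n → ℝ} {lr : ℝ} (hlr : 0 < lr) (Q : Set (Rn n))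
    (hσQtop : (∫⁻ x in Q, σ x) ≠ ∞)
    (hAQtop : (∫⁻ x in Q, ENNReal.ofReal (Φ (|f x| / lr)) * σ x) ≠ ∞) :
    (∫⁻ x in Q, σ x) * luxNorm Φ Q σ f ≤
      ENNReal.ofReal lr *
        ((∫⁻ x in Q, σ x) + ∫⁻ x in Q, ENNReal.ofReal (Φ (|f x| / lr)) * σ x) := by
  set σQ := ∫⁻ x in Q, σ x with hσQ
  set AQ := ∫⁻ x in Q, ENNReal.ofReal (Φ (|f x| / lr)) * σ x with hAQ
  rcases eq_or_ne σQ 0 with h0 | h0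
  · rw [h0, zero_mul]; exact zero_le
  set cc : ℝ := max 1 (AQ / σQ).toReal with hcc
  have hcc1 : (1:ℝ) ≤ cc := le_max_left _ _
  have hccpos : (0:ℝ) < cc := lt_of_lt_of_le one_pos hcc1
  have hocc0 : ENNReal.ofReal cc ≠ 0 := (ENNReal.ofReal_pos.mpr hccpos).ne'
  have hocctop : ENNReal.ofReal cc ≠ ∞ := ENNReal.ofReal_ne_top
  have hdivtop : AQ / σQ ≠ ∞ := (ENNReal.div_lt_top hAQtop h0).ne
  have hAle : AQ ≤ ENNReal.ofReal cc * σQ := by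
    calc AQ = AQ / σQ * σQ := (ENNReal.div_mul_cancel h0 hσQtop).symm
      _ ≤ ENNReal.ofReal cc * σQ := by
          refine mul_le_mul_left ?_ _
          rw [← ENNReal.ofReal_toReal hdivtop]
          exact ENNReal.ofReal_le_ofReal (le_max_right _ _)
  have hconv : ∀ t : ℝ, 0 ≤ t → Φ (t / (lr * cc)) ≤ Φ (t / lr) / cc := by
    intro t ht
    have h2 := hΦc.2 (mem_Ici.mpr (div_nonneg ht hlr.le)) (mem_Ici.mpr le_rfl)
      (by positivity : (0:ℝ) ≤ 1 / cc)
      (by rw [sub_nonneg]; exact (div_le_one hccpos).mpr hcc1)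
      (by ring : 1 / cc + (1 - 1 / cc) = 1)
    simp only [smul_eq_mul, hΦ0, mul_zero, add_zero] at h2
    have harg : 1 / cc * (t / lr) = t / (lr * cc) := by
      rw [div_mul_div_comm, one_mul, mul_comm cc lr]
    rw [harg, one_div_mul_eq_div] at h2
    exact h2
  have hpt : ∀ x, ENNReal.ofReal (Φ (|f x| / (lr * cc))) * σ x ≤
      (ENNReal.ofReal cc)⁻¹ * (ENNReal.ofReal (Φ (|f x| / lr)) * σ x) := by
    intro x
    have h2 : ENNReal.ofReal (Φ (|f x| / (lr * cc))) ≤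
        ENNReal.ofReal (Φ (|f x| / lr) / cc) :=
      ENNReal.ofReal_le_ofReal (hconv _ (abs_nonneg _))
    rw [ENNReal.ofReal_div_of_pos hccpos, div_eq_mul_inv] at h2
    calc ENNReal.ofReal (Φ (|f x| / (lr * cc))) * σ x
        ≤ ENNReal.ofReal (Φ (|f x| / lr)) * (ENNReal.ofReal cc)⁻¹ * σ x :=
          mul_le_mul_left h2 _
      _ = (ENNReal.ofReal cc)⁻¹ * (ENNReal.ofReal (Φ (|f x| / lr)) * σ x) := by ring
  have hlux : luxNorm Φ Q σ f ≤ ENNReal.ofReal (lr * cc) := by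
    rw [luxNorm]
    refine sInf_le ⟨lr * cc, mul_pos hlr hccpos, rfl, ?_⟩
    calc σQ⁻¹ * ∫⁻ x in Q, ENNReal.ofReal (Φ (|f x| / (lr * cc))) * σ x
        ≤ σQ⁻¹ * ∫⁻ x in Q, (ENNReal.ofReal cc)⁻¹ *
            (ENNReal.ofReal (Φ (|f x| / lr)) * σ x) :=
          mul_le_mul_right (lintegral_mono fun x => hpt x) _
      _ = σQ⁻¹ * ((ENNReal.ofReal cc)⁻¹ * AQ) := by
          rw [lintegral_const_mul' _ _ (ENNReal.inv_ne_top.mpr hocc0), hAQ]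
      _ ≤ σQ⁻¹ * ((ENNReal.ofReal cc)⁻¹ * (ENNReal.ofReal cc * σQ)) :=
          mul_le_mul_right (mul_le_mul_right hAle _) _
      _ = 1 := by
          rw [← mul_assoc (ENNReal.ofReal cc)⁻¹, ENNReal.inv_mul_cancel hocc0 hocctop,
            one_mul, ENNReal.inv_mul_cancel h0 hσQtop]
  have hoccle : ENNReal.ofReal cc ≤ 1 + AQ / σQ := by
    have h1 : cc ≤ 1 + (AQ / σQ).toReal :=
      max_le (by linarith [ENNReal.toReal_nonneg (a := AQ / σQ)])
        (by linarith [ENNReal.toReal_nonneg (a := AQ / σQ)])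
    calc ENNReal.ofReal cc ≤ ENNReal.ofReal (1 + (AQ / σQ).toReal) :=
          ENNReal.ofReal_le_ofReal h1
      _ = 1 + AQ / σQ := by
          rw [ENNReal.ofReal_add zero_le_one ENNReal.toReal_nonneg, ENNReal.ofReal_one,
            ENNReal.ofReal_toReal hdivtop]
  calc σQ * luxNorm Φ Q σ f ≤ σQ * ENNReal.ofReal (lr * cc) := mul_le_mul_right hlux _
    _ = ENNReal.ofReal lr * (σQ * ENNReal.ofReal cc) := by
        rw [ENNReal.ofReal_mul hlr.le]; ring
    _ ≤ ENNReal.ofReal lr * (σQ * (1 + AQ / σQ)) :=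
        mul_le_mul_right (mul_le_mul_right hoccle _) _
    _ = ENNReal.ofReal lr * (σQ + AQ) := by
        rw [mul_add, mul_one, ENNReal.mul_div_cancel h0 hσQtop]

end AuxSumOverSubcubes

theorem sum_over_subcubes (n : ℕ) (hn : 0 < n) (α : ℝ) (hα : 0 < α) (hαn : α < n) :
    ∃ C : ℝ≥0∞, C ≠ ∞ ∧
      ∀ D : DyadicGrid n, ∀ σ : Rn n → ℝ≥0∞, IsWeight σ →
        ∀ Φ : ℝ → ℝ, ConvexOn ℝ (Ici 0) Φ → MonotoneOn Φ (Ici 0) → Φ 0 = 0 →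
          Tendsto (fun t => Φ t / t) atTop atTop →
          ∀ P ∈ D.cubes, ∀ f : Rn n → ℝ, Measurable f →
            (∑' c : {c : Rn n × ℝ // c ∈ D.cubes ∧ cube c.1 c.2 ⊆ cube P.1 P.2},
                volume (cube c.1.1 c.1.2) ^ (α / (n : ℝ)) *
                  (∫⁻ x in cube c.1.1 c.1.2, σ x) * luxNorm Φ (cube c.1.1 c.1.2) σ f) ≤
              C * (volume (cube P.1 P.2) ^ (α / (n : ℝ)) *
                (∫⁻ x in cube P.1 P.2, σ x) * luxNorm Φ (cube P.1 P.2) σ f) := by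
  set q : ℝ≥0∞ := ENNReal.ofReal ((2:ℝ) ^ (-α)) with hq
  have hq1 : q < 1 := by
    rw [hq]
    exact ENNReal.ofReal_lt_one.mpr
      (Real.rpow_lt_one_of_one_lt_of_neg one_lt_two (by linarith))
  have hsubpos : (0:ℝ≥0∞) < 1 - q := tsub_pos_of_lt hq1
  have hsubtop : (1 - q)⁻¹ ≠ ∞ := ENNReal.inv_ne_top.mpr hsubpos.ne'
  have hsubz : (1 - q)⁻¹ ≠ 0 :=
    ENNReal.inv_ne_zero.mpr (lt_of_le_of_lt tsub_le_self one_lt_top).ne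
  have hC0 : (2 * (1 - q)⁻¹ : ℝ≥0∞) ≠ 0 := mul_ne_zero two_ne_zero hsubz
  have hCtop : (2 * (1 - q)⁻¹ : ℝ≥0∞) ≠ ∞ := ENNReal.mul_ne_top (by norm_num) hsubtop
  refine ⟨2 * (1 - q)⁻¹, hCtop, ?_⟩
  intro D σ hσ Φ hΦc hΦm hΦ0 _ P hP f hf
  obtain ⟨kP, hkP⟩ := D.side_pow P hP
  have hVvol : volume (cube P.1 P.2) ^ (α / (n : ℝ)) = rk α kP := by
    rw [hkP]; exact volume_cube_rpow hn _ _
  have hσPtop : (∫⁻ x in cube P.1 P.2, σ x) ≠ ∞ :=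
    (hσ.2 P.1 P.2 (by rw [hkP]; exact zpow_pos two_pos kP)).ne
  rcases eq_or_ne (∫⁻ x in cube P.1 P.2, σ x) 0 with hσP0 | hσP0
  · refine le_trans (le_of_eq (ENNReal.tsum_eq_zero.mpr fun c => ?_)) (zero_le)
    have hc0 : (∫⁻ x in cube c.1.1 c.1.2, σ x) = 0 :=
      le_antisymm (le_trans (lintegral_mono_set c.2.2) hσP0.le) (zero_le)
    rw [hc0, mul_zero, zero_mul]
  have hzinj : Function.Injective (fun k : ℤ => (2:ℝ) ^ k) :=
    zpow_right_injective₀ two_pos (by norm_num)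
  have hkle : ∀ c : {c : Rn n × ℝ // c ∈ D.cubes ∧ cube c.1 c.2 ⊆ cube P.1 P.2},
      ∀ k : ℤ, c.1.2 = (2:ℝ) ^ k → k ≤ kP := by
    intro c k hk
    by_contra hgt
    push_neg at hgt
    have h1 : volume (cube c.1.1 ((2:ℝ) ^ k)) ≤ volume (cube P.1 ((2:ℝ) ^ kP)) := by
      rw [← hk, ← hkP]; exact measure_mono c.2.2
    rw [volume_cube', volume_cube'] at h1
    exact absurd h1 (ENNReal.pow_lt_pow_left hn.ne'
      ((ENNReal.ofReal_lt_ofReal_iff (zpow_pos two_pos k)).mpr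
        (zpow_lt_zpow_right₀ one_lt_two hgt))).not_ge
  have key : ∀ lr : ℝ, 0 < lr →
      (∫⁻ x in cube P.1 P.2, σ x)⁻¹ *
        (∫⁻ x in cube P.1 P.2, ENNReal.ofReal (Φ (|f x| / lr)) * σ x) ≤ 1 →
      (∑' c : {c : Rn n × ℝ // c ∈ D.cubes ∧ cube c.1 c.2 ⊆ cube P.1 P.2},
          volume (cube c.1.1 c.1.2) ^ (α / (n : ℝ)) *
            (∫⁻ x in cube c.1.1 c.1.2, σ x) * luxNorm Φ (cube c.1.1 c.1.2) σ f) ≤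
        ENNReal.ofReal lr *
          (2 * (1 - q)⁻¹ * (rk α kP * ∫⁻ x in cube P.1 P.2, σ x)) := by
    intro lr hlr hcond
    have hAV : (∫⁻ x in cube P.1 P.2, ENNReal.ofReal (Φ (|f x| / lr)) * σ x) ≤
        ∫⁻ x in cube P.1 P.2, σ x := by
      have h1 := mul_le_mul_right hcond (∫⁻ x in cube P.1 P.2, σ x)
      rwa [← mul_assoc, ENNReal.mul_inv_cancel hσP0 hσPtop, one_mul, mul_one] at h1
    set μ : Measure (Rn n) := (volume.restrict (cube P.1 P.2)).withDensity
      (fun x => σ x + ENNReal.ofReal (Φ (|f x| / lr)) * σ x) with hμ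
    have hμQ : ∀ Q : Set (Rn n), MeasurableSet Q → Q ⊆ cube P.1 P.2 →
        μ Q = (∫⁻ x in Q, σ x) + ∫⁻ x in Q, ENNReal.ofReal (Φ (|f x| / lr)) * σ x := by
      intro Q hQm hQsub
      rw [hμ, withDensity_apply _ hQm, Measure.restrict_restrict hQm,
        inter_eq_self_of_subset_left hQsub, lintegral_add_left hσ.1]
    have hμuniv : μ univ ≤ 2 * ∫⁻ x in cube P.1 P.2, σ x := by
      rw [hμ, withDensity_apply _ MeasurableSet.univ, Measure.restrict_univ,
        lintegral_add_left hσ.1, two_mul]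
      exact add_le_add_right hAV _
    calc (∑' c : {c : Rn n × ℝ // c ∈ D.cubes ∧ cube c.1 c.2 ⊆ cube P.1 P.2},
          volume (cube c.1.1 c.1.2) ^ (α / (n : ℝ)) *
            (∫⁻ x in cube c.1.1 c.1.2, σ x) * luxNorm Φ (cube c.1.1 c.1.2) σ f)
        = ∑' (c : {c : Rn n × ℝ // c ∈ D.cubes ∧ cube c.1 c.2 ⊆ cube P.1 P.2}) (k : ℤ),
            (if c.1.2 = (2:ℝ) ^ k then
              volume (cube c.1.1 c.1.2) ^ (α / (n : ℝ)) *
                (∫⁻ x in cube c.1.1 c.1.2, σ x) * luxNorm Φ (cube c.1.1 c.1.2) σ f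
            else 0) := by
          refine tsum_congr fun c => ?_
          obtain ⟨k, hk⟩ := D.side_pow c.1 c.2.1
          rw [tsum_eq_single k, if_pos hk]
          intro k' hk'
          rw [if_neg]
          intro h
          exact hk' (hzinj (h.symm.trans hk))
      _ = ∑' (k : ℤ) (c : {c : Rn n × ℝ // c ∈ D.cubes ∧ cube c.1 c.2 ⊆ cube P.1 P.2}),
            (if c.1.2 = (2:ℝ) ^ k then
              volume (cube c.1.1 c.1.2) ^ (α / (n : ℝ)) *
                (∫⁻ x in cube c.1.1 c.1.2, σ x) * luxNorm Φ (cube c.1.1 c.1.2) σ f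
            else 0) := ENNReal.tsum_comm
      _ ≤ ∑' k : ℤ, (if k ≤ kP then
            rk α k * (ENNReal.ofReal lr * (2 * ∫⁻ x in cube P.1 P.2, σ x)) else 0) := by
          refine ENNReal.tsum_le_tsum fun k => ?_
          by_cases hkle' : k ≤ kP
          · rw [if_pos hkle']
            have hsm : ∀ c : {c : Rn n × ℝ // c ∈ D.cubes ∧ cube c.1 c.2 ⊆ cube P.1 P.2},
                NullMeasurableSet
                  (if c.1.2 = (2:ℝ) ^ k then cube c.1.1 c.1.2 else (∅ : Set (Rn n))) μ := by
              intro c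
              split_ifs
              · exact (measurableSet_cube' _ _).nullMeasurableSet
              · exact MeasurableSet.empty.nullMeasurableSet
            have hsd : Pairwise (Function.onFun (AEDisjoint μ)
                fun c : {c : Rn n × ℝ // c ∈ D.cubes ∧ cube c.1 c.2 ⊆ cube P.1 P.2} =>
                  if c.1.2 = (2:ℝ) ^ k then cube c.1.1 c.1.2 else (∅ : Set (Rn n))) := by
              refine fun c c' hne => Disjoint.aedisjoint ?_
              simp only [Function.onFun]
              split_ifs with h1 h2
              · rw [Set.disjoint_left]
                intro x hx hx'
                exact hne (Subtype.ext
                  ((D.partition k x).unique ⟨c.2.1, h1, hx⟩ ⟨c'.2.1, h2, hx'⟩))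
              all_goals simp
            calc (∑' c : {c : Rn n × ℝ // c ∈ D.cubes ∧ cube c.1 c.2 ⊆ cube P.1 P.2},
                  if c.1.2 = (2:ℝ) ^ k then
                    volume (cube c.1.1 c.1.2) ^ (α / (n : ℝ)) *
                      (∫⁻ x in cube c.1.1 c.1.2, σ x) * luxNorm Φ (cube c.1.1 c.1.2) σ f
                  else 0)
                ≤ ∑' c : {c : Rn n × ℝ // c ∈ D.cubes ∧ cube c.1 c.2 ⊆ cube P.1 P.2},
                    rk α k * ENNReal.ofReal lr *
                      μ (if c.1.2 = (2:ℝ) ^ k then cube c.1.1 c.1.2 else (∅ : Set (Rn n))) := by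
                  refine ENNReal.tsum_le_tsum fun c => ?_
                  by_cases hc : c.1.2 = (2:ℝ) ^ k
                  · rw [if_pos hc, if_pos hc]
                    have hv : volume (cube c.1.1 c.1.2) ^ (α / (n : ℝ)) = rk α k := by
                      rw [hc]; exact volume_cube_rpow hn _ _
                    have hσQtop : (∫⁻ x in cube c.1.1 c.1.2, σ x) ≠ ∞ :=
                      (hσ.2 c.1.1 c.1.2 (by rw [hc]; exact zpow_pos two_pos k)).ne
                    have hAQtop :
                        (∫⁻ x in cube c.1.1 c.1.2,
                          ENNReal.ofReal (Φ (|f x| / lr)) * σ x) ≠ ∞ :=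
                      (lt_of_le_of_lt (le_trans (lintegral_mono_set c.2.2) hAV)
                        hσPtop.lt_top).ne
                    rw [hv, mul_assoc, mul_assoc,
                      hμQ _ (measurableSet_cube' _ _) c.2.2]
                    exact mul_le_mul_right
                      (percube_bound hΦc hΦ0 hlr _ hσQtop hAQtop) _
                  · rw [if_neg hc, if_neg hc]
                    simp
              _ = rk α k * ENNReal.ofReal lr *
                    ∑' c : {c : Rn n × ℝ // c ∈ D.cubes ∧ cube c.1 c.2 ⊆ cube P.1 P.2},
                      μ (if c.1.2 = (2:ℝ) ^ k then cube c.1.1 c.1.2 else (∅ : Set (Rn n))) :=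
                  ENNReal.tsum_mul_left
              _ ≤ rk α k * ENNReal.ofReal lr * μ univ :=
                  mul_le_mul_right (tsum_measure_le_measure_univ hsm hsd) _
              _ ≤ rk α k * (ENNReal.ofReal lr * (2 * ∫⁻ x in cube P.1 P.2, σ x)) := by
                  rw [mul_assoc]
                  exact mul_le_mul_right (mul_le_mul_right hμuniv _) _
          · rw [if_neg hkle']
            refine le_of_eq (ENNReal.tsum_eq_zero.mpr fun c => ?_)
            rw [if_neg]
            intro hc
            exact hkle' (hkle c k hc)
      _ = (∑' k : ℤ, if k ≤ kP then rk α k else 0) *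
            (ENNReal.ofReal lr * (2 * ∫⁻ x in cube P.1 P.2, σ x)) := by
          rw [← ENNReal.tsum_mul_right]
          refine tsum_congr fun k => ?_
          split_ifs <;> simp
      _ = ENNReal.ofReal lr *
            (2 * (1 - q)⁻¹ * (rk α kP * ∫⁻ x in cube P.1 P.2, σ x)) := by
          rw [rk_geom]
          ring
  rcases eq_empty_or_nonempty {l : ℝ≥0∞ | ∃ lr : ℝ, 0 < lr ∧ l = ENNReal.ofReal lr ∧
      (∫⁻ x in cube P.1 P.2, σ x)⁻¹ *
        ∫⁻ x in cube P.1 P.2, ENNReal.ofReal (Φ (|f x| / lr)) * σ x ≤ 1} with hE | hE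
  · have hL : luxNorm Φ (cube P.1 P.2) σ f = ∞ := by
      rw [luxNorm, hE, sInf_empty]
    rw [hL, ENNReal.mul_top (by rw [hVvol]; exact mul_ne_zero (rk_ne_zero α kP) hσP0),
      ENNReal.mul_top hC0]
    exact le_top
  · have hK0 : (2 * (1 - q)⁻¹ * (rk α kP * ∫⁻ x in cube P.1 P.2, σ x)) ≠ 0 :=
      mul_ne_zero hC0 (mul_ne_zero (rk_ne_zero α kP) hσP0)
    have hKtop : (2 * (1 - q)⁻¹ * (rk α kP * ∫⁻ x in cube P.1 P.2, σ x)) ≠ ∞ :=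
      ENNReal.mul_ne_top hCtop (ENNReal.mul_ne_top (rk_ne_top α kP) hσPtop)
    have hdiv : (∑' c : {c : Rn n × ℝ // c ∈ D.cubes ∧ cube c.1 c.2 ⊆ cube P.1 P.2},
        volume (cube c.1.1 c.1.2) ^ (α / (n : ℝ)) *
          (∫⁻ x in cube c.1.1 c.1.2, σ x) * luxNorm Φ (cube c.1.1 c.1.2) σ f) /
          (2 * (1 - q)⁻¹ * (rk α kP * ∫⁻ x in cube P.1 P.2, σ x)) ≤
        luxNorm Φ (cube P.1 P.2) σ f := by
      rw [luxNorm]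
      refine le_sInf ?_
      rintro l ⟨lr, hlr, rfl, hcond⟩
      rw [ENNReal.div_le_iff_le_mul (Or.inl hK0) (Or.inl hKtop)]
      exact key lr hlr hcond
    have hfin := (ENNReal.div_le_iff_le_mul (Or.inl hK0) (Or.inl hKtop)).mp hdiv
    refine hfin.trans (le_of_eq ?_)
    rw [hVvol]
    ring
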